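/- arXiv:2510.03537 — 2 statements merged into one kernel-verified Lean document; each statement's English description precedes it below -/
import Mathlib

section
/- Let P be an m×m row-stochastic matrix that is irreducible and aperiodic, and let π be a stationary distribution of P. Suppose the eigenvalues λ_1, …, λ_m of P (the roots of its characteristic polynomial over ℂ) are all nonzero and pairwise distinct, with λ_1 = 1, and set ρ = max_{2 ≤ k ≤ m} |λ_k|. Then for all indices i, j and all n ≥ 1, |(P^n)_{ij} − π_j| ≤ Φ · ρ^n, where Φ = ∑_{k=2}^m |∑_{l=1}^m (-1)^{m-l} e_{m-l}(λ_1, …, λ̂_k, …, λ_m) · (P^l)_{ij}| / (|λ_k| · ∏_{t≠k} |λ_k − λ_t|). -/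
open Finset Polynomial

/-- An `m × m` real matrix with nonnegative entries whose rows each sum to 1. -/
def IsRowStochastic {m : ℕ} (P : Matrix (Fin m) (Fin m) ℝ) : Prop :=
  (∀ i j, 0 ≤ P i j) ∧ ∀ i, ∑ j, P i j = 1

/-- Irreducibility of a Markov transition matrix. -/
def IsIrreducibleMC {m : ℕ} (P : Matrix (Fin m) (Fin m) ℝ) : Prop :=
  ∀ i j, ∃ n : ℕ, 1 ≤ n ∧ 0 < (P ^ n) i j

/-- Aperiodicity of a Markov transition matrix: for each state `i`, the gcd of
`{n ≥ 1 : (P^n)_{ii} > 0}` is `1`, i.e. every common divisor of that set equals `1`. -/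
def IsAperiodicMC {m : ℕ} (P : Matrix (Fin m) (Fin m) ℝ) : Prop :=
  ∀ i, ∀ d : ℕ, (∀ n : ℕ, 1 ≤ n → 0 < (P ^ n) i i → d ∣ n) → d = 1

/-- A stationary distribution of `P`. -/
def IsStationaryMC {m : ℕ} (P : Matrix (Fin m) (Fin m) ℝ) (pi : Fin m → ℝ) : Prop :=
  (∀ j, 0 ≤ pi j) ∧ (∑ j, pi j = 1) ∧ ∀ j, ∑ i, pi i * P i j = pi j

/-- The `r`-th elementary symmetric polynomial of `lam 1, …, lam m` with `lam k` omitted. -/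
noncomputable def esymmOmit {m : ℕ} (lam : Fin m → ℂ) (k : Fin m) (r : ℕ) : ℂ :=
  ∑ s ∈ Finset.powersetCard r (Finset.univ.erase k), ∏ t ∈ s, lam t


/-! Distinct eigenvalues make Lagrange interpolation at the eigenvalues a spectral
decomposition: with `L_k` the Lagrange basis polynomials and `E_k = L_k(P)`, Cayley–Hamilton gives
`P E_k = λ_k E_k`, and `∑ L_k = 1` gives `∑ E_k = 1`, so `P ^ n = ∑ λ_k ^ n E_k`.
The eigenvalue `1` is simple, so its eigenspace is spanned by the constant vector; the columns of
`E_1` lie in it and `π E_1 = π`, hence every row of `E_1` is `π` and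
`(P ^ n)_{ij} - π_j = ∑_{k ≠ 1} λ_k ^ n (E_k)_{ij}`. Finally `E_k = q_k(P) / ∏_{t ≠ k} (λ_k - λ_t)`
with `q_k = ∏_{t ≠ k} (X - λ_t)`, whose coefficients are signed elementary symmetric polynomials,
and the numerator of `Φ` is the expansion of `(P q_k(P))_{ij} = λ_k q_k(P)_{ij}`. -/

namespace Matrix

variable {ι K : Type*} [Fintype ι] [DecidableEq ι] [Field K]

noncomputable def spectralProjector (A : Matrix ι ι K) (lam : ι → K) (k : ι) : Matrix ι ι K :=
  aeval A (Lagrange.basis univ lam k)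

variable {A : Matrix ι ι K} {lam : ι → K}

theorem spectralProjector_eq_smul (k : ι) :
    A.spectralProjector lam k =
      Lagrange.nodalWeight univ lam k • aeval A (Lagrange.nodal (univ.erase k) lam) := by
  rw [spectralProjector, Lagrange.basis_eq_prod_sub_inv_mul_nodal_div (mem_univ k),
    ← Lagrange.nodal_erase_eq_nodal_div (mem_univ k), map_mul, aeval_C, Algebra.smul_def]

theorem mul_aeval_nodal_erase (hchar : A.charpoly = ∏ k, (X - C (lam k))) (k : ι) :
    A * aeval A (Lagrange.nodal (univ.erase k) lam) =
      lam k • aeval A (Lagrange.nodal (univ.erase k) lam) := by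
  have hCH := aeval_self_charpoly A
  rw [hchar, ← Lagrange.nodal_eq, Lagrange.nodal_eq_mul_nodal_erase (mem_univ k), map_mul,
    map_sub, aeval_X, aeval_C, sub_mul, sub_eq_zero, ← Algebra.smul_def] at hCH
  exact hCH

theorem mul_spectralProjector (hchar : A.charpoly = ∏ k, (X - C (lam k))) (k : ι) :
    A * A.spectralProjector lam k = lam k • A.spectralProjector lam k := by
  rw [spectralProjector_eq_smul, mul_smul_comm, mul_aeval_nodal_erase hchar, smul_comm]

theorem pow_mul_spectralProjector (hchar : A.charpoly = ∏ k, (X - C (lam k))) (k : ι) (n : ℕ) :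
    A ^ n * A.spectralProjector lam k = lam k ^ n • A.spectralProjector lam k := by
  induction n with
  | zero => simp
  | succ n ih =>
    rw [pow_succ', mul_assoc, ih, mul_smul_comm, mul_spectralProjector hchar, smul_smul, pow_succ]

theorem sum_spectralProjector (hinj : Function.Injective lam) :
    ∑ k, A.spectralProjector lam k = 1 := by
  rcases isEmpty_or_nonempty ι with hι | hι
  · exact Subsingleton.elim _ _
  · simp only [spectralProjector]
    rw [← map_sum, Lagrange.sum_basis hinj.injOn univ_nonempty, map_one]

theorem pow_eq_sum_smul_spectralProjector (hchar : A.charpoly = ∏ k, (X - C (lam k)))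
    (hinj : Function.Injective lam) (n : ℕ) :
    A ^ n = ∑ k, lam k ^ n • A.spectralProjector lam k := by
  calc A ^ n = A ^ n * ∑ k, A.spectralProjector lam k := by
        rw [sum_spectralProjector hinj, mul_one]
    _ = _ := by
        rw [mul_sum]
        exact sum_congr rfl fun k _ => pow_mul_spectralProjector hchar k n

theorem pow_sub_spectralProjector_eq_sum (hchar : A.charpoly = ∏ k, (X - C (lam k)))
    (hinj : Function.Injective lam) {k₀ : ι} (hk₀ : lam k₀ = 1) (n : ℕ) :
    A ^ n - A.spectralProjector lam k₀ =
      ∑ k ∈ univ.erase k₀, lam k ^ n • A.spectralProjector lam k := by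
  rw [pow_eq_sum_smul_spectralProjector hchar hinj, ← add_sum_erase _ _ (mem_univ k₀), hk₀,
    one_pow, one_smul, add_sub_cancel_left]

theorem rootMultiplicity_charpoly_eq_one (hchar : A.charpoly = ∏ k, (X - C (lam k)))
    (hinj : Function.Injective lam) (k : ι) : A.charpoly.rootMultiplicity (lam k) = 1 := by
  classical
  have hprod : ∏ k, (X - C (lam k)) = ((univ.val.map lam).map fun a => X - C a).prod := by
    rw [Multiset.map_map]; rfl
  rw [← count_roots, hchar, hprod, roots_multiset_prod_X_sub_C,
    Multiset.count_map_eq_count' _ _ hinj]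
  exact Multiset.count_eq_one_of_mem univ.nodup (mem_univ k)

theorem exists_smul_eq_of_mulVec_eq_smul {μ : K} (hμ : A.charpoly.rootMultiplicity μ ≤ 1)
    {u v : ι → K} (hu0 : u ≠ 0) (hu : A *ᵥ u = μ • u) (hv : A *ᵥ v = μ • v) :
    ∃ c : K, c • u = v := by
  set W := Module.End.eigenspace (toLin' A) μ
  have hmem : ∀ w, A *ᵥ w = μ • w → w ∈ W := fun w hw =>
    Module.End.mem_eigenspace_iff.mpr (by rwa [toLin'_apply])
  have hW : Module.finrank K W = 1 := by
    refine le_antisymm ?_ (Submodule.one_le_finrank_iff.mpr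
      (Submodule.ne_bot_iff _ |>.mpr ⟨u, hmem u hu, hu0⟩))
    exact (LinearMap.finrank_eigenspace_le _ μ).trans (by rwa [charpoly_toLin'])
  obtain ⟨c, hc⟩ := (finrank_eq_one_iff_of_nonzero' (⟨u, hmem u hu⟩ : W)
    (by simpa using hu0)).mp hW ⟨v, hmem v hv⟩
  exact ⟨c, congrArg Subtype.val hc⟩

theorem vecMul_spectralProjector (hchar : A.charpoly = ∏ k, (X - C (lam k)))
    (hinj : Function.Injective lam) {v : ι → K} {k : ι} (hv : v ᵥ* A = lam k • v) :
    v ᵥ* A.spectralProjector lam k = v := by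
  have hvanish : ∀ l ≠ k, v ᵥ* A.spectralProjector lam l = 0 := by
    intro l hl
    have h := congrArg (v ᵥ* ·) (mul_spectralProjector (A := A) hchar l)
    simp only [← vecMul_vecMul, hv, smul_vecMul, vecMul_smul] at h
    exact (smul_right_injective _ (sub_ne_zero.mpr (hinj.ne hl.symm))).eq_iff.mp
      (by rw [sub_smul, h, sub_self, smul_zero])
  calc v ᵥ* A.spectralProjector lam k = v ᵥ* ∑ l, A.spectralProjector lam l := by
        rw [vecMul_sum, sum_eq_single k (fun l _ hl => hvanish l hl) (by simp)]
    _ = v := by rw [sum_spectralProjector hinj, vecMul_one]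

theorem spectralProjector_apply_of_eq_one (hchar : A.charpoly = ∏ k, (X - C (lam k)))
    (hinj : Function.Injective lam) {k : ι} (hk : lam k = 1) {p : ι → K}
    (hA : A *ᵥ 1 = 1) (hp : p ᵥ* A = p) (hsum : ∑ i, p i = 1) (a b : ι) :
    A.spectralProjector lam k a b = p b := by
  set E := A.spectralProjector lam k
  have hcol : A *ᵥ (fun a => E a b) = lam k • fun a => E a b := by
    ext a
    exact congrFun (congrFun (mul_spectralProjector hchar k) a) b
  obtain ⟨c, hc⟩ := exists_smul_eq_of_mulVec_eq_smul
    (rootMultiplicity_charpoly_eq_one hchar hinj k).le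
    (Function.ne_iff.mpr ⟨k, one_ne_zero⟩) (by rw [hA, hk, one_smul]) hcol
  have hconst : ∀ a, E a b = c := fun a => by simpa using (congrFun hc a).symm
  have hpE := congrFun (vecMul_spectralProjector hchar hinj (by rw [hp, hk, one_smul])) b
  calc E a b = ∑ i, p i * c := by rw [← sum_mul, hsum, one_mul, hconst]
    _ = (p ᵥ* E) b := by simp only [vecMul, dotProduct, hconst]
    _ = p b := hpE

end Matrix

theorem Lagrange.coeff_nodal {R ι : Type*} [CommRing R] (s : Finset ι) (v : ι → R) {l : ℕ}
    (hl : l ≤ #s) :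
    (Lagrange.nodal s v).coeff l = (-1) ^ (#s - l) * ∑ t ∈ s.powersetCard (#s - l), ∏ i ∈ t, v i := by
  have hcard : Multiset.card (s.val.map v) = #s := by simp
  have h := Multiset.prod_X_sub_C_coeff (s.val.map v) (hcard ▸ hl)
  rw [hcard, Finset.esymm_map_val] at h
  rw [Lagrange.nodal_eq, ← h, Multiset.map_map]
  rfl

section Stochastic

open Matrix

theorem IsRowStochastic.map_ofReal_mulVec_one {m : ℕ} {P : Matrix (Fin m) (Fin m) ℝ}
    (hP : IsRowStochastic P) : P.map ((↑) : ℝ → ℂ) *ᵥ 1 = 1 := by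
  ext i
  simpa [Matrix.mulVec, dotProduct] using congrArg ((↑) : ℝ → ℂ) (hP.2 i)

theorem IsStationaryMC.vecMul_map_ofReal {m : ℕ} {P : Matrix (Fin m) (Fin m) ℝ} {pi : Fin m → ℝ}
    (hpi : IsStationaryMC P pi) :
    (fun j => (pi j : ℂ)) ᵥ* P.map ((↑) : ℝ → ℂ) = fun j => (pi j : ℂ) := by
  ext j
  simpa [Matrix.vecMul, dotProduct] using congrArg ((↑) : ℝ → ℂ) (hpi.2.2 j)

end Stochastic

namespace Matrix

variable {m : ℕ} {A : Matrix (Fin m) (Fin m) ℂ} {lam : Fin m → ℂ}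

theorem sum_esymmOmit_mul_pow_succ_apply (k i j : Fin m) :
    ∑ l : Fin m, (-1 : ℂ) ^ (m - 1 - (l : ℕ)) * esymmOmit lam k (m - 1 - (l : ℕ)) *
        (A ^ ((l : ℕ) + 1)) i j =
      (A * aeval A (Lagrange.nodal (univ.erase k) lam)) i j := by
  have hcard : #(univ.erase k) = m - 1 := by simp
  have hdeg : (Lagrange.nodal (univ.erase k) lam).natDegree < m := by
    rw [Lagrange.natDegree_nodal, hcard]
    exact Nat.sub_lt k.pos one_pos
  rw [aeval_eq_sum_range' hdeg, mul_sum, sum_apply,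
    ← Fin.sum_univ_eq_sum_range (fun l => (A * _ • A ^ l) i j)]
  refine sum_congr rfl fun l _ => ?_
  rw [mul_smul_comm, ← pow_succ', smul_apply, smul_eq_mul,
    Lagrange.coeff_nodal _ _ (hcard ▸ Nat.le_sub_one_of_lt l.isLt), hcard]
  rfl

theorem norm_sum_esymmOmit_div (hchar : A.charpoly = ∏ k, (X - C (lam k))) (k i j : Fin m) :
    ‖∑ l : Fin m, (-1 : ℂ) ^ (m - 1 - (l : ℕ)) * esymmOmit lam k (m - 1 - (l : ℕ)) *
        (A ^ ((l : ℕ) + 1)) i j‖ / (‖lam k‖ * ∏ t ∈ univ.erase k, ‖lam k - lam t‖) =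
      ‖lam k * A.spectralProjector lam k i j‖ / ‖lam k‖ := by
  rw [sum_esymmOmit_mul_pow_succ_apply, mul_aeval_nodal_erase hchar, spectralProjector_eq_smul,
    smul_apply, smul_apply, smul_eq_mul, smul_eq_mul, Lagrange.nodalWeight, prod_inv_distrib,
    norm_mul, norm_mul, norm_mul, norm_inv, norm_prod]
  ring

end Matrix

/-- At `z = 0` the right side is the junk value `0 / 0 * ρ ^ n = 0`, and so is the left side
since `n ≥ 1`. -/
theorem norm_pow_mul_le_of_norm_le {𝕜 : Type*} [NormedDivisionRing 𝕜] {z : 𝕜} {ρ : ℝ}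
    (hz : ‖z‖ ≤ ρ) (x : 𝕜) {n : ℕ} (hn : 1 ≤ n) : ‖z ^ n * x‖ ≤ ‖z * x‖ / ‖z‖ * ρ ^ n := by
  rcases eq_or_ne z 0 with rfl | hz0
  · simp [zero_pow (Nat.one_le_iff_ne_zero.mp hn)]
  rw [norm_mul, norm_mul, norm_pow, mul_div_cancel_left₀ _ (norm_ne_zero_iff.mpr hz0), mul_comm]
  gcongr

theorem stmt_5_general {m : ℕ} (hm : 0 < m) (P : Matrix (Fin m) (Fin m) ℝ)
    (hP : IsRowStochastic P)
    (pi : Fin m → ℝ) (hpi : IsStationaryMC P pi)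
    (lam : Fin m → ℂ)
    (hchar : (P.map ((↑) : ℝ → ℂ)).charpoly = ∏ k : Fin m, (X - C (lam k)))
    (hinj : Function.Injective lam)
    (h1 : lam ⟨0, hm⟩ = 1)
    (ρ : ℝ)
    (hρ : IsGreatest {r : ℝ | ∃ k : Fin m, k ≠ ⟨0, hm⟩ ∧ ‖lam k‖ = r} ρ) :
    ∀ i j : Fin m, ∀ n : ℕ, 1 ≤ n →
      |(P ^ n) i j - pi j| ≤
        (∑ k ∈ Finset.univ.erase (⟨0, hm⟩ : Fin m),
          ‖∑ l : Fin m, (-1 : ℂ) ^ (m - 1 - (l : ℕ)) *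
              esymmOmit lam k (m - 1 - (l : ℕ)) * ((P ^ ((l : ℕ) + 1)) i j : ℂ)‖ /
            (‖lam k‖ *
              ∏ t ∈ Finset.univ.erase k, ‖lam k - lam t‖)) * ρ ^ n := by
  intro i j n hn
  set A := P.map ((↑) : ℝ → ℂ)
  have hpow : ∀ n, ((P ^ n) i j : ℂ) = (A ^ n) i j := fun n =>
    congrFun (congrFun (Matrix.map_pow P Complex.ofRealHom n) i) j
  have hstat : A.spectralProjector lam ⟨0, hm⟩ i j = pi j :=
    Matrix.spectralProjector_apply_of_eq_one (p := fun j => (pi j : ℂ)) hchar hinj h1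
      hP.map_ofReal_mulVec_one hpi.vecMul_map_ofReal (by exact_mod_cast hpi.2.1) i j
  have hdiff : ((P ^ n) i j - pi j : ℂ) =
      ∑ k ∈ univ.erase ⟨0, hm⟩, lam k ^ n * A.spectralProjector lam k i j := by
    rw [hpow, ← hstat, ← Matrix.sub_apply, Matrix.pow_sub_spectralProjector_eq_sum hchar hinj h1,
      Matrix.sum_apply]
    rfl
  calc |(P ^ n) i j - pi j|
      = ‖∑ k ∈ univ.erase ⟨0, hm⟩, lam k ^ n * A.spectralProjector lam k i j‖ := by
        rw [← hdiff, ← Complex.ofReal_sub, Complex.norm_real, Real.norm_eq_abs]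
    _ ≤ ∑ k ∈ univ.erase ⟨0, hm⟩, ‖lam k ^ n * A.spectralProjector lam k i j‖ := norm_sum_le _ _
    _ ≤ ∑ k ∈ univ.erase ⟨0, hm⟩, ‖lam k * A.spectralProjector lam k i j‖ / ‖lam k‖ * ρ ^ n :=
        sum_le_sum fun k hk => norm_pow_mul_le_of_norm_le (hρ.2 ⟨k, ne_of_mem_erase hk, rfl⟩) _ hn
    _ = _ := by simp only [hpow, Matrix.norm_sum_esymmOmit_div hchar, sum_mul]

/-- Convergence theorem for Markov chains with a spectral error term. -/
theorem stmt_5 {m : ℕ} (hm : 0 < m) (P : Matrix (Fin m) (Fin m) ℝ)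
    (hP : IsRowStochastic P) (hirr : IsIrreducibleMC P) (hap : IsAperiodicMC P)
    (pi : Fin m → ℝ) (hpi : IsStationaryMC P pi)
    (lam : Fin m → ℂ)
    (hchar : (P.map ((↑) : ℝ → ℂ)).charpoly = ∏ k : Fin m, (X - C (lam k)))
    (hinj : Function.Injective lam) (hnz : ∀ k, lam k ≠ 0)
    (h1 : lam ⟨0, hm⟩ = 1)
    (ρ : ℝ)
    (hρ : IsGreatest {r : ℝ | ∃ k : Fin m, k ≠ ⟨0, hm⟩ ∧ ‖lam k‖ = r} ρ) :
    ∀ i j : Fin m, ∀ n : ℕ, 1 ≤ n →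
      |(P ^ n) i j - pi j| ≤
        (∑ k ∈ Finset.univ.erase (⟨0, hm⟩ : Fin m),
          ‖∑ l : Fin m, (-1 : ℂ) ^ (m - 1 - (l : ℕ)) *
              esymmOmit lam k (m - 1 - (l : ℕ)) * ((P ^ ((l : ℕ) + 1)) i j : ℂ)‖ /
            (‖lam k‖ *
              ∏ t ∈ Finset.univ.erase k, ‖lam k - lam t‖)) * ρ ^ n :=
  stmt_5_general hm P hP pi hpi lam hchar hinj h1 ρ hρ
end

section
/- Let Γ be a connected k-regular simple undirected graph on m ≥ 2 vertices with adjacency matrix A, and let P = (1/k)·A, so that P is a symmetric row-stochastic matrix. Suppose P is aperiodic and the eigenvalues of A are all simple and nonzero. Let τ be the second largest eigenvalue of A in absolute value, i.e., τ = max{|μ| : μ an eigenvalue of A, |μ| ≠ k}. Then for every pair of vertices v_i, v_j there is a walk in Γ from v_i to v_j of length at most ⌈log(m−1) / log(k/τ)⌉; in particular, the diameter of Γ satisfies D(Γ) ≤ ⌈log(m−1) / log(k/τ)⌉. -/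
/-!
Write `(A ^ n) i j = ∑ₗ λₗ ^ n uₗ(i) uₗ(j)` in an orthonormal eigenbasis of the adjacency
matrix. By connectivity the eigenvalue `k` is simple with constant eigenvector, so its term is
`k ^ n / m`; aperiodicity excludes `-k`, since an eigenvector for `-k` would change sign along
every edge and 2-colour the graph. All other eigenvalues have modulus at most `τ`, and by AM–GM
and orthonormality their terms add up to at most `τ ^ n (1 - 1/m)` in absolute value.

If no walk of length `≤ N` joined `i` and `j`, then `(A ^ n) i j = 0` for `n ≤ N`, which gives
`k ^ N ≤ (m - 1) τ ^ N`; the choice of `N` is the reverse inequality. In this equality case every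
eigenvalue contributing to the entry has modulus exactly `τ`, so at an even exponent
`n ∈ {N, N - 1}` with `n ≥ 1` the entry equals `(k ^ n - τ ^ n) / m > 0`, a contradiction unless
`N = 1`. For `N = 1` we get `k = (m - 1) τ`, and the trace identity `∑ λₗ ^ 2 = m k` then forces
`k = m - 1`: the graph is complete.
-/

open Finset Polynomial Matrix

lemma Matrix.hasEigenvalue_toLin'_iff_of_charpoly_eq {K n ι : Type*} [Field K] [Fintype n]
    [DecidableEq n] [Fintype ι] {A : Matrix n n K} {μ : ι → K}
    (h : A.charpoly = ∏ i, (X - C (μ i))) {t : K} :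
    Module.End.HasEigenvalue (toLin' A) t ↔ ∃ i, μ i = t := by
  rw [Module.End.hasEigenvalue_iff_isRoot_charpoly, charpoly_toLin', h, IsRoot.def, eval_prod,
    prod_eq_zero_iff]
  simp [sub_eq_zero, eq_comm]

namespace Matrix.IsHermitian

variable {n : Type*} [Fintype n] [DecidableEq n] {A : Matrix n n ℝ} (hA : A.IsHermitian)

lemma hasEigenvalue_iff {t : ℝ} :
    Module.End.HasEigenvalue (toLin' A) t ↔ ∃ l, hA.eigenvalues l = t := by
  rw [Module.End.hasEigenvalue_iff_mem_spectrum, spectrum_toLin',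
    hA.spectrum_real_eq_range_eigenvalues]
  rfl

lemma pow_apply_eq_sum (p : ℕ) (i j : n) :
    (A ^ p) i j =
      ∑ l, hA.eigenvalues l ^ p * (hA.eigenvectorBasis l i * hA.eigenvectorBasis l j) := by
  conv_lhs => rw [hA.spectral_theorem]
  rw [← map_pow, diagonal_pow, Unitary.conjStarAlgAut_apply, mul_apply]
  refine sum_congr rfl fun l _ => ?_
  simp [mul_diagonal]
  ring

lemma sum_eigenvectorBasis_mul (l l' : n) :
    ∑ i, hA.eigenvectorBasis l i * hA.eigenvectorBasis l' i = if l = l' then 1 else 0 := by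
  simpa [PiLp.inner_apply, mul_comm] using
    orthonormal_iff_ite.mp hA.eigenvectorBasis.orthonormal l l'

lemma sum_eigenvectorBasis_apply_mul (i j : n) :
    ∑ l, hA.eigenvectorBasis l i * hA.eigenvectorBasis l j = if i = j then 1 else 0 := by
  simpa [one_apply] using (hA.pow_apply_eq_sum 0 i j).symm

lemma sum_erase_abs_eigenvectorBasis_mul_le {l0 : n} {c : ℝ}
    (hc : ∀ i, hA.eigenvectorBasis l0 i * hA.eigenvectorBasis l0 i = c) (i j : n) :
    ∑ l ∈ univ.erase l0, |hA.eigenvectorBasis l i * hA.eigenvectorBasis l j| ≤ 1 - c := by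
  have hrow (i : n) : ∑ l ∈ univ.erase l0, hA.eigenvectorBasis l i * hA.eigenvectorBasis l i
      = 1 - c := by
    rw [sum_erase_eq_sub (mem_univ l0), hA.sum_eigenvectorBasis_apply_mul, if_pos rfl, hc]
  calc ∑ l ∈ univ.erase l0, |hA.eigenvectorBasis l i * hA.eigenvectorBasis l j|
      ≤ ∑ l ∈ univ.erase l0, (hA.eigenvectorBasis l i * hA.eigenvectorBasis l i +
          hA.eigenvectorBasis l j * hA.eigenvectorBasis l j) / 2 := by
        refine sum_le_sum fun l _ => ?_
        rw [abs_mul]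
        nlinarith [sq_nonneg (|hA.eigenvectorBasis l i| - |hA.eigenvectorBasis l j|),
          abs_mul_abs_self (hA.eigenvectorBasis l i), abs_mul_abs_self (hA.eigenvectorBasis l j)]
    _ = 1 - c := by rw [← sum_div, sum_add_distrib, hrow, hrow]; ring

end Matrix.IsHermitian

section SpectralSum

variable {ι : Type*} [Fintype ι] [DecidableEq ι] {lam q : ι → ℝ} {l0 : ι} {τ : ℝ}

lemma abs_sum_erase_pow_mul_le (hlam : ∀ l ≠ l0, |lam l| ≤ τ) (n : ℕ) :
    |∑ l ∈ univ.erase l0, lam l ^ n * q l| ≤ τ ^ n * ∑ l ∈ univ.erase l0, |q l| := by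
  rw [mul_sum]
  refine (abs_sum_le_sum_abs _ _).trans (sum_le_sum fun l hl => ?_)
  rw [abs_mul, abs_pow]
  gcongr
  exact hlam l (ne_of_mem_erase hl)

lemma abs_eq_of_abs_sum_erase_pow_mul_ge (hlam : ∀ l ≠ l0, |lam l| ≤ τ) (hτ : 0 ≤ τ) {n : ℕ}
    (hn : n ≠ 0)
    (hge : τ ^ n * ∑ l ∈ univ.erase l0, |q l| ≤ |∑ l ∈ univ.erase l0, lam l ^ n * q l|) :
    ∀ l ≠ l0, q l ≠ 0 → |lam l| = τ := by
  have hterm : ∀ l ∈ univ.erase l0, |lam l| ^ n * |q l| ≤ τ ^ n * |q l| := fun l hl => by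
    gcongr
    exact hlam l (ne_of_mem_erase hl)
  have heq : ∑ l ∈ univ.erase l0, |lam l| ^ n * |q l| = ∑ l ∈ univ.erase l0, τ ^ n * |q l| := by
    refine le_antisymm (sum_le_sum hterm) ?_
    rw [← mul_sum]
    refine hge.trans ((abs_sum_le_sum_abs _ _).trans_eq ?_)
    simp only [abs_mul, abs_pow]
  intro l hl hql
  have := (sum_eq_sum_iff_of_le hterm).mp heq l (mem_erase.mpr ⟨hl, mem_univ l⟩)
  exact (pow_left_inj₀ (abs_nonneg _) hτ hn).mp (mul_right_cancel₀ (abs_pos.mpr hql).ne' this)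

lemma sum_erase_pow_mul_of_even (hsupp : ∀ l ≠ l0, q l ≠ 0 → |lam l| = τ) {n : ℕ}
    (hn : Even n) :
    ∑ l ∈ univ.erase l0, lam l ^ n * q l = τ ^ n * ∑ l ∈ univ.erase l0, q l := by
  rw [mul_sum]
  refine sum_congr rfl fun l hl => ?_
  by_cases hql : q l = 0
  · simp [hql]
  · rw [← hn.pow_abs, hsupp l (ne_of_mem_erase hl) hql]

lemma sum_erase_pow_mul_eq {c : ℝ} (hq0 : q l0 = c) {n : ℕ} (hs : ∑ l, lam l ^ n * q l = 0) :
    ∑ l ∈ univ.erase l0, lam l ^ n * q l = -(lam l0 ^ n * c) := by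
  rw [sum_erase_eq_sub (mem_univ l0), hs, hq0, zero_sub]

lemma eq_one_of_sum_pow_mul_eq_zero (hlam : ∀ l ≠ l0, |lam l| ≤ τ) (hτ0 : 0 ≤ τ)
    (hτ : τ < lam l0) {c : ℝ} (hc : 0 < c) (hq0 : q l0 = c) (hsum : ∑ l, q l = 0)
    (hq : ∑ l ∈ univ.erase l0, |q l| ≤ 1 - c) {N : ℕ} (hN : 1 ≤ N)
    (hNτ : τ ^ N * (1 - c) ≤ lam l0 ^ N * c)
    (hs : ∀ n, 1 ≤ n → n ≤ N → ∑ l, lam l ^ n * q l = 0) : N = 1 := by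
  have hlam0 : 0 < lam l0 := hτ0.trans_lt hτ
  have hsplit (n : ℕ) :
      ∑ l, lam l ^ n * q l = lam l0 ^ n * c + ∑ l ∈ univ.erase l0, lam l ^ n * q l := by
    rw [← add_sum_erase _ _ (mem_univ l0), hq0]
  have hsupp : ∀ l ≠ l0, q l ≠ 0 → |lam l| = τ := by
    refine abs_eq_of_abs_sum_erase_pow_mul_ge hlam hτ0 (n := N) (by omega) ?_
    rw [sum_erase_pow_mul_eq hq0 (hs N hN le_rfl), abs_neg, abs_of_pos (by positivity)]
    exact (mul_le_mul_of_nonneg_left hq (by positivity)).trans hNτ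
  have hne (n : ℕ) (hn : 1 ≤ n) (he : Even n) : ∑ l, lam l ^ n * q l ≠ 0 := by
    rw [hsplit, sum_erase_pow_mul_of_even hsupp he, sum_erase_eq_sub (mem_univ l0), hsum, hq0]
    have : τ ^ n < lam l0 ^ n := pow_lt_pow_left₀ hτ hτ0 (by omega)
    nlinarith
  rcases Nat.even_or_odd N with he | ⟨r, rfl⟩
  · exact absurd (hs N hN le_rfl) (hne N hN he)
  · by_contra h1
    exact hne (2 * r) (by omega) (even_two_mul r) (hs (2 * r) (by omega) (by omega))

end SpectralSum

lemma exists_nat_eq_ceil_log_div_log {x a : ℝ} (hx : 1 < x) (ha : 1 < a) :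
    ∃ N : ℕ, (N : ℤ) = ⌈Real.log x / Real.log a⌉ ∧ 1 ≤ N ∧ x ≤ a ^ N := by
  have hL : 0 < Real.log x / Real.log a := div_pos (Real.log_pos hx) (Real.log_pos ha)
  refine ⟨⌈Real.log x / Real.log a⌉.toNat, Int.toNat_of_nonneg (Int.ceil_nonneg hL.le), ?_, ?_⟩
  · have := Int.ceil_pos.mpr hL
    omega
  · have h := (Int.le_ceil _).trans_eq
      (congrArg Int.cast (Int.toNat_of_nonneg (Int.ceil_nonneg hL.le))).symm
    push_cast at h
    rw [div_le_iff₀ (Real.log_pos ha), ← Real.log_pow] at h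
    exact (Real.log_le_log_iff (by linarith) (by positivity)).mp h

namespace SimpleGraph

lemma diam_le_of_forall_exists_walk {V : Type*} {G : SimpleGraph V} {N : ℕ}
    (h : ∀ i j : V, ∃ w : G.Walk i j, w.length ≤ N) : G.diam ≤ N := by
  refine ENat.toNat_le_of_le_natCast (ediam_le_of_edist_le fun i j => ?_)
  obtain ⟨w, hw⟩ := h i j
  exact (edist_le w).trans (by exact_mod_cast hw)

variable {V : Type*} [Fintype V] {G : SimpleGraph V} [DecidableRel G.Adj] {k : ℕ}

lemma adjMatrix_pow_apply_eq_zero [DecidableEq V] {n : ℕ} {i j : V}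
    (h : ∀ w : G.Walk i j, w.length ≠ n) : (G.adjMatrix ℝ ^ n) i j = 0 := by
  rw [adjMatrix_pow_apply_eq_card_walk, Nat.cast_eq_zero, Fintype.card_eq_zero_iff]
  exact ⟨fun w => h w.1 w.2⟩

lemma not_colorable_two_of_aperiodic [DecidableEq V] (i : V)
    (hap : ∀ d : ℕ, (∀ n : ℕ, 1 ≤ n → 0 < (G.adjMatrix ℝ ^ n) i i → d ∣ n) → d = 1) :
    ¬ G.Colorable 2 := by
  intro h2
  refine absurd (hap 2 fun n _ hpos => ?_) (by norm_num)
  rw [adjMatrix_pow_apply_eq_card_walk, Nat.cast_pos, Fintype.card_pos_iff] at hpos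
  obtain ⟨w, hw⟩ := hpos
  exact hw ▸ (two_colorable_iff_forall_loop_even.mp h2 i w).two_dvd

namespace IsRegularOfDegree

lemma abs_le_of_hasEigenvalue [DecidableEq V] (hreg : G.IsRegularOfDegree k) {t : ℝ}
    (ht : Module.End.HasEigenvalue (toLin' (G.adjMatrix ℝ)) t) : |t| ≤ k := by
  obtain ⟨i, hi⟩ := eigenvalue_mem_ball ht
  simp only [Metric.mem_closedBall, adjMatrix_apply, SimpleGraph.irrefl, if_false, Real.dist_eq,
    sub_zero, Real.norm_eq_abs, apply_ite abs, abs_one, abs_zero] at hi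
  rwa [sum_erase _ (by simp), ← degree_eq_sum_if_adj, hreg i] at hi

lemma adj_of_card_sub_one_le (hreg : G.IsRegularOfDegree k) (hk : Fintype.card V - 1 ≤ k)
    {i j : V} (hij : i ≠ j) : G.Adj i j := by
  have := G.degree_lt_card_verts i
  exact (G.degree_eq_card_sub_one i).mp (by rw [hreg i] at this ⊢; omega) hij

lemma apply_eq_of_mulVec_eq [DecidableEq V] (hreg : G.IsRegularOfDegree k)
    (hconn : G.Connected) {v : V → ℝ} (hv : G.adjMatrix ℝ *ᵥ v = (k : ℝ) • v) (a b : V) :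
    v a = v b := by
  have hlap : G.lapMatrix ℝ = (k : ℝ) • 1 - G.adjMatrix ℝ := by
    ext i j
    simp [lapMatrix, degMatrix, hreg i, diagonal_apply, one_apply]
  have : G.lapMatrix ℝ *ᵥ v = 0 := by
    rw [hlap, sub_mulVec, smul_mulVec, one_mulVec, hv, sub_self]
  exact (lapMatrix_mulVec_eq_zero_iff_forall_reachable G).mp this a b (hconn a b)

lemma eq_neg_of_adj_of_abs_le (hreg : G.IsRegularOfDegree k) {v : V → ℝ}
    (hv : G.adjMatrix ℝ *ᵥ v = (-(k : ℝ)) • v) {a b : V} (ha : ∀ x, |v x| ≤ |v a|)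
    (hab : G.Adj a b) : v b = -v a := by
  have hle : ∀ u ∈ G.neighborFinset a, -v a * v u ≤ v a ^ 2 := fun u _ => by
    nlinarith [neg_abs_le (v a * v u), abs_mul (v a) (v u), ha u, abs_nonneg (v a), sq_abs (v a)]
  have hsum : ∑ u ∈ G.neighborFinset a, -v a * v u = ∑ u ∈ G.neighborFinset a, v a ^ 2 := by
    rw [← mul_sum, ← adjMatrix_mulVec_apply, hv, sum_const, card_neighborFinset_eq_degree, hreg a]
    simp only [Pi.smul_apply, smul_eq_mul, nsmul_eq_mul]
    ring
  have hb := (sum_eq_sum_iff_of_le hle).mp hsum b ((G.mem_neighborFinset a b).mpr hab)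
  have : (v b + v a) ^ 2 = 0 := by
    nlinarith [sq_abs (v a), sq_abs (v b), ha b, abs_nonneg (v b)]
  linarith [pow_eq_zero_iff (n := 2) two_ne_zero |>.mp this]

lemma colorable_two_of_mulVec_eq_neg (hreg : G.IsRegularOfDegree k) (hconn : G.Connected)
    {v : V → ℝ} (hv0 : v ≠ 0) (hv : G.adjMatrix ℝ *ᵥ v = (-(k : ℝ)) • v) : G.Colorable 2 := by
  have := hconn.nonempty
  obtain ⟨a, -, ha⟩ := exists_max_image univ (fun x => |v x|) univ_nonempty
  -- The set of maximisers of `|v|` is closed under adjacency, so it is everything.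
  have hmax (x : V) : |v x| = |v a| := by
    have hr : Relation.ReflTransGen G.Adj a x := G.reachable_eq_reflTransGen ▸ hconn a x
    induction hr with
    | refl => rfl
    | tail _ hcd ih =>
      rw [hreg.eq_neg_of_adj_of_abs_le hv (fun y => ih ▸ ha y (mem_univ y)) hcd, abs_neg, ih]
  have hv_ne (x : V) : v x ≠ 0 := by
    obtain ⟨y, hy⟩ := Function.ne_iff.mp hv0
    rw [← abs_ne_zero, hmax, ← hmax y]
    exact abs_ne_zero.mpr hy
  refine (Coloring.mk (fun x => decide (0 < v x)) fun {x y} hxy => ?_).colorable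
  have hy := hreg.eq_neg_of_adj_of_abs_le hv (fun z => (hmax z).trans (hmax x).symm |>.le) hxy
  rcases (hv_ne x).lt_or_gt with h | h <;> simp [hy, h, h.le]

lemma exists_eigenvalues_eq [DecidableEq V] (hreg : G.IsRegularOfDegree k) (hconn : G.Connected)
    (hA : (G.adjMatrix ℝ).IsHermitian) :
    ∃ l0, hA.eigenvalues l0 = k ∧ (∀ l ≠ l0, hA.eigenvalues l ≠ k) ∧
      ∀ i j, hA.eigenvectorBasis l0 i * hA.eigenvectorBasis l0 j = (Fintype.card V : ℝ)⁻¹ := by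
  obtain ⟨i⟩ := hconn.nonempty
  have hk : Module.End.HasEigenvalue (toLin' (G.adjMatrix ℝ)) k := by
    refine Module.End.hasEigenvalue_of_hasEigenvector (x := Function.const V 1) ⟨?_, ?_⟩
    · rw [Module.End.mem_eigenspace_iff, toLin'_apply]
      ext
      simp [hreg.degree_eq]
    · exact Function.ne_iff.mpr ⟨i, one_ne_zero⟩
  obtain ⟨l0, hl0⟩ := hA.hasEigenvalue_iff.mp hk
  have hconst (l : V) (hl : hA.eigenvalues l = k) (x y : V) :
      hA.eigenvectorBasis l x = hA.eigenvectorBasis l y :=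
    hreg.apply_eq_of_mulVec_eq hconn (hl ▸ hA.mulVec_eigenvectorBasis l) x y
  have hcard : (Fintype.card V : ℝ) ≠ 0 := Nat.cast_ne_zero.mpr (Fintype.card_pos_iff.mpr ⟨i⟩).ne'
  have hsq (l : V) (hl : hA.eigenvalues l = k) (x y : V) :
      hA.eigenvectorBasis l x * hA.eigenvectorBasis l y = (Fintype.card V : ℝ)⁻¹ := by
    have := hA.sum_eigenvectorBasis_mul l l
    rw [if_pos rfl, sum_congr rfl fun z _ => congrArg₂ (· * ·) (hconst l hl z x) (hconst l hl z y),
      sum_const, card_univ, nsmul_eq_mul] at this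
    exact eq_inv_of_mul_eq_one_right this
  have hne (l : V) (hl : hA.eigenvalues l = k) : hA.eigenvectorBasis l i ≠ 0 := fun h => by
    have := hsq l hl i i
    rw [h, zero_mul, eq_comm, inv_eq_zero] at this
    exact hcard this
  -- A second eigenvector for `k` would also be constant, hence not orthogonal to the first.
  refine ⟨l0, hl0, fun l hl hlk => ?_, hsq l0 hl0⟩
  have horth := hA.sum_eigenvectorBasis_mul l0 l
  rw [if_neg (Ne.symm hl), sum_congr rfl fun z _ =>
      congrArg₂ (· * ·) (hconst l0 hl0 z i) (hconst l hlk z i),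
    sum_const, card_univ, nsmul_eq_mul, mul_eq_zero, or_iff_right hcard, mul_eq_zero] at horth
  exact horth.elim (hne l0 hl0) (hne l hlk)

lemma eigenvalues_ne_neg [DecidableEq V] (hreg : G.IsRegularOfDegree k) (hconn : G.Connected)
    (hbip : ¬ G.Colorable 2) (hA : (G.adjMatrix ℝ).IsHermitian) (l : V) :
    hA.eigenvalues l ≠ -k := fun h =>
  hbip <| hreg.colorable_two_of_mulVec_eq_neg hconn
    ((WithLp.ofLp_eq_zero 2).ne.2 (hA.eigenvectorBasis.orthonormal.ne_zero l))
    (h ▸ hA.mulVec_eigenvectorBasis l)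

lemma sum_eigenvalues_sq [DecidableEq V] (hreg : G.IsRegularOfDegree k)
    (hA : (G.adjMatrix ℝ).IsHermitian) :
    ∑ l, hA.eigenvalues l ^ 2 = Fintype.card V * k := by
  calc ∑ l, hA.eigenvalues l ^ 2
      = ∑ l, hA.eigenvalues l ^ 2 * ∑ i, hA.eigenvectorBasis l i * hA.eigenvectorBasis l i := by
        simp [hA.sum_eigenvectorBasis_mul]
    _ = ∑ i, (G.adjMatrix ℝ ^ 2) i i := by
        simp_rw [hA.pow_apply_eq_sum, mul_sum]
        exact sum_comm
    _ = Fintype.card V * k := by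
        simp only [sq, adjMatrix_mul_self_apply_self, hreg.degree_eq, sum_const, card_univ,
          nsmul_eq_mul]

lemma card_mul_le_sq_add_mul_sq [DecidableEq V] (hreg : G.IsRegularOfDegree k)
    (hA : (G.adjMatrix ℝ).IsHermitian) {l0 : V} (hl0 : hA.eigenvalues l0 = k) {τ : ℝ}
    (hgap : ∀ l ≠ l0, |hA.eigenvalues l| ≤ τ) :
    Fintype.card V * (k : ℝ) ≤ k ^ 2 + (Fintype.card V - 1) * τ ^ 2 := by
  rw [← hreg.sum_eigenvalues_sq hA, ← add_sum_erase _ _ (mem_univ l0), hl0]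
  gcongr
  calc ∑ l ∈ univ.erase l0, hA.eigenvalues l ^ 2 ≤ ∑ l ∈ univ.erase l0, τ ^ 2 :=
        sum_le_sum fun l hl => by
          rw [← sq_abs]
          exact pow_le_pow_left₀ (abs_nonneg _) (hgap l (ne_of_mem_erase hl)) 2
    _ = (Fintype.card V - 1) * τ ^ 2 := by
        rw [sum_const, card_erase_of_mem (mem_univ l0), card_univ, nsmul_eq_mul,
          Nat.cast_sub (Fintype.card_pos_iff.mpr ⟨l0⟩), Nat.cast_one]

lemma one_lt_and_pos_of_gap [DecidableEq V] (hreg : G.IsRegularOfDegree k)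
    (hA : (G.adjMatrix ℝ).IsHermitian) {l0 : V} (hl0 : hA.eigenvalues l0 = k) {τ : ℝ}
    (hgap : ∀ l ≠ l0, |hA.eigenvalues l| ≤ τ) (hτ0 : 0 ≤ τ) (hτk : τ < k) : 1 < k ∧ 0 < τ := by
  have htr := hreg.card_mul_le_sq_add_mul_sq hA hl0 hgap
  have hkV : (k : ℝ) + 1 ≤ Fintype.card V := by
    exact_mod_cast hreg.degree_eq l0 ▸ G.degree_lt_card_verts l0
  have hk0 : (0 : ℝ) < k := hτ0.trans_lt hτk
  constructor
  · by_contra! h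
    have : (k : ℝ) ≤ 1 := by exact_mod_cast h
    nlinarith [mul_lt_mul_of_pos_left (pow_lt_pow_left₀ hτk hτ0 two_ne_zero)
      (by linarith : (0 : ℝ) < Fintype.card V - 1), mul_nonneg hk0.le (sub_nonneg.2 this)]
  · by_contra! h
    have : τ = 0 := le_antisymm h hτ0
    subst this
    nlinarith

lemma card_le_succ_of_sub_one_mul_eq [DecidableEq V] (hreg : G.IsRegularOfDegree k)
    (hA : (G.adjMatrix ℝ).IsHermitian) {l0 : V} (hl0 : hA.eigenvalues l0 = k) {τ : ℝ}
    (hgap : ∀ l ≠ l0, |hA.eigenvalues l| ≤ τ) (hτ0 : 0 ≤ τ) (hk : 0 < k)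
    (heq : ((Fintype.card V : ℝ) - 1) * τ = k) : Fintype.card V ≤ k + 1 := by
  have htr := hreg.card_mul_le_sq_add_mul_sq hA hl0 hgap
  have hk0 : (0 : ℝ) < k := by exact_mod_cast hk
  have hV : (0 : ℝ) ≤ Fintype.card V - 1 := by nlinarith
  have : (Fintype.card V : ℝ) * k * (Fintype.card V - 1) ≤ Fintype.card V * k * k := by
    nlinarith [mul_le_mul_of_nonneg_left htr hV]
  have := le_of_mul_le_mul_left this (mul_pos (by linarith) hk0)
  exact_mod_cast (by linarith : (Fintype.card V : ℝ) ≤ k + 1)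

theorem exists_walk_length_le [DecidableEq V] (hreg : G.IsRegularOfDegree k)
    (hA : (G.adjMatrix ℝ).IsHermitian) {l0 : V} (hl0 : hA.eigenvalues l0 = k)
    (hb0 : ∀ i j, hA.eigenvectorBasis l0 i * hA.eigenvectorBasis l0 j = (Fintype.card V : ℝ)⁻¹)
    {τ : ℝ} (hgap : ∀ l ≠ l0, |hA.eigenvalues l| ≤ τ) (hτ0 : 0 ≤ τ) (hτk : τ < k) {N : ℕ}
    (hN : 1 ≤ N) (hNτ : ((Fintype.card V : ℝ) - 1) * τ ^ N ≤ k ^ N) (i j : V) :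
    ∃ w : G.Walk i j, w.length ≤ N := by
  by_contra! hno
  have hm : (0 : ℝ) < Fintype.card V := by exact_mod_cast Fintype.card_pos_iff.mpr ⟨i⟩
  have hij : i ≠ j := by
    rintro rfl
    exact absurd (hno .nil) (by simp)
  set q : V → ℝ := fun l => hA.eigenvectorBasis l i * hA.eigenvectorBasis l j
  have hs (n : ℕ) (hn : n ≤ N) : ∑ l, hA.eigenvalues l ^ n * q l = 0 := by
    rw [← hA.pow_apply_eq_sum]
    exact adjMatrix_pow_apply_eq_zero fun w => by have := hno w; omega
  have hq := hA.sum_erase_abs_eigenvectorBasis_mul_le (fun x => hb0 x x) i j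
  obtain rfl : N = 1 := by
    refine eq_one_of_sum_pow_mul_eq_zero hgap hτ0 (hl0 ▸ hτk) (inv_pos.2 hm) (hb0 i j)
      (by simpa [hij] using hA.sum_eigenvectorBasis_apply_mul i j) hq hN ?_ fun n _ hn => hs n hn
    calc τ ^ N * (1 - (Fintype.card V : ℝ)⁻¹)
        = ((Fintype.card V - 1) * τ ^ N) * (Fintype.card V : ℝ)⁻¹ := by field_simp
      _ ≤ hA.eigenvalues l0 ^ N * (Fintype.card V : ℝ)⁻¹ := by rw [hl0]; gcongr
  have h1 := abs_sum_erase_pow_mul_le hgap 1 (q := q)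
  have hk0 : (0 : ℝ) < k := hτ0.trans_lt hτk
  rw [sum_erase_pow_mul_eq (q := q) (hb0 i j) (hs 1 le_rfl), hl0, abs_neg, pow_one, pow_one,
    abs_of_pos (mul_pos hk0 (inv_pos.2 hm))] at h1
  have heq : ((Fintype.card V : ℝ) - 1) * τ = k := by
    refine le_antisymm (by simpa using hNτ) ?_
    have := h1.trans (mul_le_mul_of_nonneg_left hq hτ0)
    field_simp at this
    linarith
  have hcard := hreg.card_le_succ_of_sub_one_mul_eq hA hl0 hgap hτ0 (by exact_mod_cast hk0) heq
  have hadj := hreg.adj_of_card_sub_one_le (by omega) hij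
  exact absurd (hno hadj.toWalk) (by simp)

end IsRegularOfDegree

end SimpleGraph

theorem stmt_9_general {m k : ℕ}
    (G : SimpleGraph (Fin m)) [DecidableRel G.Adj]
    (hreg : G.IsRegularOfDegree k) (hconn : G.Connected)
    (P : Matrix (Fin m) (Fin m) ℝ) (hP : P = ((k : ℝ))⁻¹ • G.adjMatrix ℝ)
    (hap : ∀ i, ∀ d : ℕ, (∀ n : ℕ, 1 ≤ n → 0 < (P ^ n) i i → d ∣ n) → d = 1)
    (μ : Fin m → ℝ)
    (hchar : (G.adjMatrix ℝ).charpoly = ∏ i : Fin m, (X - C (μ i)))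
    (τ : ℝ)
    (hτ : IsGreatest {r : ℝ | ∃ i : Fin m, |μ i| ≠ (k : ℝ) ∧ |μ i| = r} τ) :
    (∀ i j : Fin m, ∃ w : G.Walk i j,
        (w.length : ℤ) ≤ ⌈Real.log ((m : ℝ) - 1) / Real.log ((k : ℝ) / τ)⌉) ∧
    (G.diam : ℤ) ≤ ⌈Real.log ((m : ℝ) - 1) / Real.log ((k : ℝ) / τ)⌉ := by
  have hA := G.isHermitian_adjMatrix ℝ
  obtain ⟨i0⟩ := hconn.nonempty
  have hbip : ¬ G.Colorable 2 := by
    refine G.not_colorable_two_of_aperiodic i0 fun d hd => hap i0 d fun n hn hpos => hd n hn ?_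
    rw [hP, _root_.smul_pow, Matrix.smul_apply, smul_eq_mul] at hpos
    exact pos_of_mul_pos_right hpos (by positivity)
  obtain ⟨l0, hl0, hl0u, hb0⟩ := hreg.exists_eigenvalues_eq hconn hA
  have hgap : ∀ l ≠ l0, |hA.eigenvalues l| ≤ τ := fun l hl => by
    obtain ⟨i, hi⟩ := (hasEigenvalue_toLin'_iff_of_charpoly_eq hchar).mp
      (hA.hasEigenvalue_iff.mpr ⟨l, rfl⟩)
    refine hτ.2 ⟨i, fun h => ?_, by rw [hi]⟩
    rcases (abs_eq (Nat.cast_nonneg k)).mp (hi ▸ h) with h | h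
    exacts [hl0u l hl h, hreg.eigenvalues_ne_neg hconn hbip hA l h]
  obtain ⟨i1, hi1k, hi1⟩ := hτ.1
  have hτk : τ < k := hi1 ▸ (hreg.abs_le_of_hasEigenvalue
    ((hasEigenvalue_toLin'_iff_of_charpoly_eq hchar).mpr ⟨i1, rfl⟩)).lt_of_ne hi1k
  obtain ⟨hk1, hτ0⟩ := hreg.one_lt_and_pos_of_gap hA hl0 hgap (hi1 ▸ abs_nonneg _) hτk
  have hkm : k < m := by simpa [hreg.degree_eq] using G.degree_lt_card_verts i0
  have hm3 : (3 : ℝ) ≤ m := by exact_mod_cast (show 3 ≤ m by omega)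
  obtain ⟨N, hN, hN1, hNτ⟩ :=
    exists_nat_eq_ceil_log_div_log (by linarith : (1 : ℝ) < m - 1) ((one_lt_div hτ0).mpr hτk)
  rw [div_pow, le_div_iff₀ (by positivity)] at hNτ
  have hwalk (i j : Fin m) : ∃ w : G.Walk i j, w.length ≤ N :=
    hreg.exists_walk_length_le hA hl0 hb0 hgap hτ0.le hτk hN1 (by simpa using hNτ) i j
  rw [← hN]
  exact ⟨fun i j => (hwalk i j).imp fun w hw => by exact_mod_cast hw,
    by exact_mod_cast SimpleGraph.diam_le_of_forall_exists_walk hwalk⟩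

/-- Chung's diameter bound for connected `k`-regular graphs: every pair of vertices is
joined by a walk of length at most `⌈log(m−1)/log(k/τ)⌉`, and hence the diameter is at
most `⌈log(m−1)/log(k/τ)⌉`, where `τ` is the largest absolute value of an eigenvalue of
the adjacency matrix other than `k`. -/
theorem stmt_9 {m k : ℕ} (hm : 2 ≤ m) (hk : 0 < k)
    (G : SimpleGraph (Fin m)) [DecidableRel G.Adj]
    (hreg : G.IsRegularOfDegree k) (hconn : G.Connected)
    (P : Matrix (Fin m) (Fin m) ℝ) (hP : P = ((k : ℝ))⁻¹ • G.adjMatrix ℝ)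
    (hap : ∀ i, ∀ d : ℕ, (∀ n : ℕ, 1 ≤ n → 0 < (P ^ n) i i → d ∣ n) → d = 1)
    (μ : Fin m → ℝ)
    (hchar : (G.adjMatrix ℝ).charpoly = ∏ i : Fin m, (X - C (μ i)))
    (hinj : Function.Injective μ) (hnz : ∀ i, μ i ≠ 0)
    (τ : ℝ)
    (hτ : IsGreatest {r : ℝ | ∃ i : Fin m, |μ i| ≠ (k : ℝ) ∧ |μ i| = r} τ) :
    (∀ i j : Fin m, ∃ w : G.Walk i j,
        (w.length : ℤ) ≤ ⌈Real.log ((m : ℝ) - 1) / Real.log ((k : ℝ) / τ)⌉) ∧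
    (G.diam : ℤ) ≤ ⌈Real.log ((m : ℝ) - 1) / Real.log ((k : ℝ) / τ)⌉ :=
  stmt_9_general G hreg hconn P hP hap μ hchar τ hτ
end
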